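/- Let f : ℂ → ℂ be a nonconstant entire function, let R > 0, and set Ω = {z : ℂ | R < |z|}. Then for every compact set K ⊆ ℂ, only finitely many connected components of the open set f⁻¹(Ω) intersect K. Equivalently, if (zₙ) is a sequence of points of f⁻¹(Ω) such that zₙ and zₘ lie in distinct connected components of f⁻¹(Ω) whenever n ≠ m, then |zₙ| → ∞. -/

import Mathlib

/-!
Every component of `U = {z | R < |f z|}` is unbounded by the maximum modulus principle, so a
component meeting the closed unit disc about a point `c` also meets its boundary circle. On that
circle, `t ↦ |f(c + e^{it})|² - R²` is real analytic, so it either vanishes identically (and then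
`U` misses the circle) or has finitely many zeros in `[0, 2π]`; these cut the circle into finitely
many arcs, each lying in `U` or outside it, and an arc in `U` lies in a single component.
Covering a compact set by finitely many unit discs gives the claim.
-/

open Set Metric Filter Function Bornology Topology

section TopologicalSpace

variable {X : Type*} [TopologicalSpace X]

lemma setOf_connectedComponentIn_inter_nonempty (U K : Set X) :
    {C : Set X | (∃ z ∈ U, C = connectedComponentIn U z) ∧ (C ∩ K).Nonempty} =
      connectedComponentIn U '' (U ∩ K) := by
  ext C
  constructor
  · rintro ⟨⟨z, -, rfl⟩, x, hxC, hxK⟩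
    exact ⟨x, ⟨connectedComponentIn_subset U z hxC, hxK⟩, (connectedComponentIn_eq hxC).symm⟩
  · rintro ⟨x, ⟨hxU, hxK⟩, rfl⟩
    exact ⟨⟨x, hxU, rfl⟩, x, mem_connectedComponentIn hxU, hxK⟩

lemma IsOpen.frontier_connectedComponentIn_subset_compl [LocallyConnectedSpace X] {U : Set X}
    (hU : IsOpen U) (x : X) : frontier (connectedComponentIn U x) ⊆ Uᶜ := by
  intro w hw hwU
  obtain ⟨y, hyw, hyx⟩ := mem_closure_iff.1 hw.1 _ hU.connectedComponentIn
    (mem_connectedComponentIn hwU)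
  have hxw : connectedComponentIn U x = connectedComponentIn U w :=
    (connectedComponentIn_eq hyx).trans (connectedComponentIn_eq hyw).symm
  apply hw.2
  rw [hU.connectedComponentIn.interior_eq, hxw]
  exact mem_connectedComponentIn hwU

lemma IsCompact.finite_image_inter_of_nhds {β : Type*} {K s : Set X} (hK : IsCompact K)
    {g : X → β} (hg : ∀ x ∈ K, ∃ t ∈ 𝓝 x, (g '' (s ∩ t)).Finite) :
    (g '' (s ∩ K)).Finite := by
  choose t ht hfin using hg
  obtain ⟨F, hKF⟩ := hK.elim_nhds_subcover' t ht
  refine (F.finite_toSet.biUnion fun x _ => hfin x x.2).subset ?_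
  rintro _ ⟨y, ⟨hys, hyK⟩, rfl⟩
  obtain ⟨x, hxF, hyx⟩ := mem_iUnion₂.1 (hKF hyK)
  exact mem_biUnion hxF ⟨y, ⟨hys, hyx⟩, rfl⟩

lemma tendsto_cofinite_cocompact_of_injective_comp {ι β : Type*} {s : Set X} {g : X → β}
    (hg : ∀ K, IsCompact K → (g '' (s ∩ K)).Finite) {z : ι → X} (hzs : ∀ n, z n ∈ s)
    (hinj : Injective (g ∘ z)) : Tendsto z cofinite (cocompact X) := by
  refine tendsto_cofinite_cocompact_iff.2 fun K hK => ?_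
  refine Finite.of_finite_image ((hg K hK).subset ?_) hinj.injOn
  rintro _ ⟨n, hn, rfl⟩
  exact ⟨z n, ⟨hzs n, hn⟩, rfl⟩

end TopologicalSpace

lemma IsPreconnected.forall_lt_of_forall_ne {X α : Type*} [TopologicalSpace X] [LinearOrder α]
    [TopologicalSpace α] [OrderClosedTopology α] {S : Set X} (hS : IsPreconnected S) {φ : X → α}
    (hφ : ContinuousOn φ S) {a : X} {c : α} (ha : a ∈ S) (hca : c < φ a)
    (hne : ∀ t ∈ S, φ t ≠ c) : ∀ t ∈ S, c < φ t := by
  intro t ht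
  by_contra! htc
  obtain ⟨u, hu, huc⟩ := hS.intermediate_value ht ha hφ ⟨htc, hca.le⟩
  exact hne u hu huc

lemma IsPreconnected.inter_sphere_nonempty {X : Type*} [PseudoMetricSpace X] {S : Set X}
    (hS : IsPreconnected S) {a c : X} {r : ℝ} (ha : a ∈ S) (har : dist a c ≤ r)
    (hSr : ¬S ⊆ closedBall c r) : (S ∩ sphere c r).Nonempty := by
  obtain ⟨b, hbS, hb⟩ := not_subset.1 hSr
  exact hS.intermediate_value ha hbS (continuous_id.dist continuous_const).continuousOn
    ⟨har, (not_le.1 hb).le⟩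

lemma image_connectedComponentIn_closedBall_subset_sphere {X : Type*} [PseudoMetricSpace X]
    {U : Set X} (hU : ∀ x ∈ U, ¬IsBounded (connectedComponentIn U x)) (c : X) (r : ℝ) :
    connectedComponentIn U '' (U ∩ closedBall c r) ⊆
      connectedComponentIn U '' (U ∩ sphere c r) := by
  rintro _ ⟨x, ⟨hxU, hxr⟩, rfl⟩
  obtain ⟨w, hwC, hwr⟩ := isPreconnected_connectedComponentIn.inter_sphere_nonempty
    (mem_connectedComponentIn hxU) hxr fun h => hU x hxU (isBounded_closedBall.subset h)
  exact ⟨w, ⟨connectedComponentIn_subset U x hwC, hwr⟩, (connectedComponentIn_eq hwC).symm⟩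

lemma Set.Finite.finite_image_of_forall_Icc_disjoint {α β : Type*} [LinearOrder α]
    {F s : Set α} (hF : F.Finite) (hsF : Disjoint s F) {g : α → β}
    (hg : ∀ x ∈ s, ∀ y ∈ s, x ≤ y → Disjoint (Icc x y) F → g x = g y) : (g '' s).Finite := by
  set above : α → Set α := fun t => {u ∈ F | t < u}
  have hle : ∀ x ∈ s, ∀ y ∈ s, x ≤ y → above x = above y → g x = g y := by
    intro x hx y hy hxy hxy'
    refine hg x hx y hy hxy (disjoint_left.2 fun u hu huF => ?_)
    have hxu : x < u := hu.1.lt_of_ne fun hxu => disjoint_left.1 hsF hx (hxu ▸ huF)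
    have hyu : u ∈ above y := hxy' ▸ ⟨huF, hxu⟩
    exact hyu.2.not_ge hu.2
  have hclass : ∀ x ∈ s, ∀ y ∈ s, above x = above y → g x = g y := by
    intro x hx y hy h
    rcases le_total x y with hxy | hyx
    · exact hle x hx y hy hxy h
    · exact (hle y hy x hx hyx h.symm).symm
  have hfin : (above '' s).Finite :=
    hF.powerset.subset (by rintro _ ⟨t, -, rfl⟩; exact sep_subset _ _)
  refine (hfin.biUnion fun A _ =>
    Subsingleton.finite (s := g '' {t ∈ s | above t = A}) ?_).subset ?_
  · rintro _ ⟨x, ⟨hx, hxA⟩, rfl⟩ _ ⟨y, ⟨hy, hyA⟩, rfl⟩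
    exact hclass x hx y hy (hxA.trans hyA.symm)
  · rintro _ ⟨t, ht, rfl⟩
    exact mem_biUnion (mem_image_of_mem above ht) ⟨t, ⟨ht, rfl⟩, rfl⟩

lemma AnalyticOnNhd.eqOn_zero_or_finite_zeros {𝕜 E : Type*} [NontriviallyNormedField 𝕜]
    [NormedAddCommGroup E] [NormedSpace 𝕜 E] {f : 𝕜 → E} {U K : Set 𝕜}
    (hf : AnalyticOnNhd 𝕜 f U) (hU : IsPreconnected U) (hK : IsCompact K) (hKU : K ⊆ U) :
    EqOn f 0 U ∨ {x ∈ K | f x = 0}.Finite :=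
  (hf.eqOn_zero_or_eventually_ne_zero_of_preconnected hU).imp_right fun h =>
    (hK.finite_sdiff_of_mem_codiscreteWithin (codiscreteWithin_mono hKU h)).subset
      fun x hx => ⟨hx.1, fun hne : f x ≠ 0 => hne hx.2⟩

lemma AnalyticAt.sq_norm_of_complex {E : Type*} [NormedAddCommGroup E] [NormedSpace ℝ E]
    {g : E → ℂ} {x : E} (hg : AnalyticAt ℝ g x) : AnalyticAt ℝ (fun y => ‖g y‖ ^ 2) x := by
  have hre : AnalyticAt ℝ (fun y => (g y).re) x := (Complex.reCLM.analyticAt _).comp hg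
  have him : AnalyticAt ℝ (fun y => (g y).im) x := (Complex.imCLM.analyticAt _).comp hg
  simp_rw [Complex.sq_norm, Complex.normSq_apply]
  exact (hre.mul hre).add (him.mul him)

lemma not_isBounded_connectedComponentIn_preimage_norm_gt {E F : Type*} [NormedAddCommGroup E]
    [NormedSpace ℂ E] [Nontrivial E] [NormedAddCommGroup F] [NormedSpace ℂ F] {f : E → F}
    (hf : Differentiable ℂ f) {R : ℝ} {x : E} (hx : x ∈ f ⁻¹' {w | R < ‖w‖}) :
    ¬IsBounded (connectedComponentIn (f ⁻¹' {w | R < ‖w‖}) x) := by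
  intro hb
  have hU : IsOpen (f ⁻¹' {w : F | R < ‖w‖}) :=
    (isOpen_lt continuous_const continuous_norm).preimage hf.continuous
  have hfr : ∀ w ∈ frontier (connectedComponentIn (f ⁻¹' {w | R < ‖w‖}) x), ‖f w‖ ≤ R :=
    fun w hw => not_lt.1 (hU.frontier_connectedComponentIn_subset_compl x hw)
  exact not_le.2 hx (Complex.norm_le_of_forall_mem_frontier_norm_le hb hf.diffContOnCl hfr
    (subset_closure (mem_connectedComponentIn hx)))

lemma finite_image_connectedComponentIn_preimage_norm_gt_inter_sphere {f : ℂ → ℂ}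
    (hf : Differentiable ℂ f) {R : ℝ} (hR : 0 ≤ R) (c : ℂ) {r : ℝ} (hr : 0 ≤ r) :
    (connectedComponentIn (f ⁻¹' {w | R < ‖w‖}) ''
      (f ⁻¹' {w | R < ‖w‖} ∩ sphere c r)).Finite := by
  set U := f ⁻¹' {w : ℂ | R < ‖w‖}
  set γ := circleMap c r
  set φ : ℝ → ℝ := fun t => ‖f (γ t)‖ ^ 2 - R ^ 2
  have hφ : AnalyticOnNhd ℝ φ univ := fun t _ =>
    (((hf.analyticAt _).restrictScalars.comp
      (analyticOnNhd_circleMap c r t trivial)).sq_norm_of_complex).sub analyticAt_const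
  have hγU : ∀ t, γ t ∈ U ↔ 0 < φ t := fun t => by
    simp only [U, φ, mem_preimage, mem_ofPred_eq, sub_pos]
    exact (pow_lt_pow_iff_left₀ hR (norm_nonneg _) two_ne_zero).symm
  have himage : connectedComponentIn U '' (U ∩ sphere c r) =
      (connectedComponentIn U ∘ γ) '' (Ioc 0 (2 * Real.pi) ∩ γ ⁻¹' U) := by
    rw [image_comp, image_inter_preimage, image_circleMap_Ioc, abs_of_nonneg hr, inter_comm]
  rw [himage]
  rcases hφ.eqOn_zero_or_finite_zeros isPreconnected_univ (isCompact_Icc (a := 0)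
    (b := 2 * Real.pi)) (subset_univ _) with hzero | hfin
  · have hempty : Ioc 0 (2 * Real.pi) ∩ γ ⁻¹' U = ∅ := eq_empty_of_forall_notMem
      fun t ht => ((hγU t).1 ht.2).ne' (hzero (mem_univ t))
    simp [hempty]
  refine hfin.finite_image_of_forall_Icc_disjoint ?_ ?_
  · exact disjoint_left.2 fun t ht hzero => ((hγU t).1 ht.2).ne' hzero.2
  intro x hx y hy hxy hdisj
  have hpos : ∀ t ∈ Icc x y, 0 < φ t :=
    isPreconnected_Icc.forall_lt_of_forall_ne hφ.continuous.continuousOn (left_mem_Icc.2 hxy)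
      ((hγU x).1 hx.2) fun t ht h0 =>
        disjoint_left.1 hdisj ht ⟨⟨hx.1.1.le.trans ht.1, ht.2.trans hy.1.2⟩, h0⟩
  have hsub : γ '' Icc x y ⊆ U := by
    rintro _ ⟨t, ht, rfl⟩
    exact (hγU t).2 (hpos t ht)
  have harc := (isPreconnected_Icc.image γ (continuous_circleMap c r).continuousOn
    ).subset_connectedComponentIn ⟨x, left_mem_Icc.2 hxy, rfl⟩ hsub
  exact connectedComponentIn_eq (harc ⟨y, right_mem_Icc.2 hxy, rfl⟩)

theorem finitely_many_tracts_meet_compact_general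
    (f : ℂ → ℂ)
    (hf : Differentiable ℂ f)
    (R : ℝ) (hR : 0 < R) :
    (∀ K : Set ℂ, IsCompact K →
      {C : Set ℂ |
        (∃ z ∈ f ⁻¹' {w : ℂ | R < ‖w‖},
          C = connectedComponentIn (f ⁻¹' {w : ℂ | R < ‖w‖}) z) ∧
        (C ∩ K).Nonempty}.Finite) ∧
    (∀ z : ℕ → ℂ, (∀ n, z n ∈ f ⁻¹' {w : ℂ | R < ‖w‖}) →
      (∀ n m, n ≠ m →
        connectedComponentIn (f ⁻¹' {w : ℂ | R < ‖w‖}) (z n) ≠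
        connectedComponentIn (f ⁻¹' {w : ℂ | R < ‖w‖}) (z m)) →
      Filter.Tendsto (fun n => ‖z n‖) Filter.atTop Filter.atTop) := by
  set U := f ⁻¹' {w : ℂ | R < ‖w‖}
  have hfin : ∀ K, IsCompact K → (connectedComponentIn U '' (U ∩ K)).Finite :=
    fun K hK => hK.finite_image_inter_of_nhds fun x _ =>
      ⟨closedBall x 1, closedBall_mem_nhds x one_pos,
        (finite_image_connectedComponentIn_preimage_norm_gt_inter_sphere hf hR.le x
          zero_le_one).subset <| image_connectedComponentIn_closedBall_subset_sphere
            (fun _ hy => not_isBounded_connectedComponentIn_preimage_norm_gt hf hy) x 1⟩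
  refine ⟨fun K hK => setOf_connectedComponentIn_inter_nonempty U K ▸ hfin K hK,
    fun z hzU hz => ?_⟩
  have hinj : Injective (connectedComponentIn U ∘ z) := fun n m h =>
    by_contra fun hne => hz n m hne h
  have hcocompact := tendsto_cofinite_cocompact_of_injective_comp hfin hzU hinj
  rw [Nat.cofinite_eq_atTop] at hcocompact
  exact tendsto_norm_cocompact_atTop.comp hcocompact

/-- For a nonconstant entire function `f` and `Ω = {|z| > R}`, only finitely many
connected components of `f⁻¹(Ω)` meet any given compact set; equivalently, points
of pairwise distinct components tend to infinity. -/
theorem finitely_many_tracts_meet_compact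
    (f : ℂ → ℂ)
    (hf : Differentiable ℂ f)
    (hnc : ¬ ∃ c : ℂ, ∀ z : ℂ, f z = c)
    (R : ℝ) (hR : 0 < R) :
    (∀ K : Set ℂ, IsCompact K →
      {C : Set ℂ |
        (∃ z ∈ f ⁻¹' {w : ℂ | R < ‖w‖},
          C = connectedComponentIn (f ⁻¹' {w : ℂ | R < ‖w‖}) z) ∧
        (C ∩ K).Nonempty}.Finite) ∧
    (∀ z : ℕ → ℂ, (∀ n, z n ∈ f ⁻¹' {w : ℂ | R < ‖w‖}) →
      (∀ n m, n ≠ m →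
        connectedComponentIn (f ⁻¹' {w : ℂ | R < ‖w‖}) (z n) ≠
        connectedComponentIn (f ⁻¹' {w : ℂ | R < ‖w‖}) (z m)) →
      Filter.Tendsto (fun n => ‖z n‖) Filter.atTop Filter.atTop) :=
  finitely_many_tracts_meet_compact_general f hf R hR
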